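/- (Lemma 3.4(i)) In the setting described in the context, with λ real satisfying |λ − n²| ≤ n/2, one has a_n = a_{−n}. -/

import Mathlib

noncomputable section

/-- Japanese bracket `⟨m⟩ = max {1, |m|}`. -/
def jap (m : ℤ) : ℝ := max 1 |(m : ℝ)|

/-- Squared shifted Sobolev norm `‖u‖_{s;j}²` of a sequence of Fourier coefficients. -/
def shiftNormSq (s : ℝ) (j : ℤ) (u : ℤ → ℂ) : ℝ :=
  ∑' m : ℤ, jap (m + j) ^ (2 * s) * ‖u m‖ ^ 2

/-- Shifted Sobolev norm `‖u‖_{s;j}`. -/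
def shiftNorm (s : ℝ) (j : ℤ) (u : ℤ → ℂ) : ℝ := Real.sqrt (shiftNormSq s j u)

/-- Sobolev norm `‖u‖_s`. -/
def sobNorm (s : ℝ) (u : ℤ → ℂ) : ℝ := shiftNorm s 0 u

/-- Membership in `H^s(𝕋)`. -/
def memHs (s : ℝ) (u : ℤ → ℂ) : Prop :=
  Summable fun m : ℤ => jap m ^ (2 * s) * ‖u m‖ ^ 2

/-- Fourier coefficients of the product `q·w` (convolution). -/
def fconv (q w : ℤ → ℂ) (m : ℤ) : ℂ := ∑' k : ℤ, q k * w (m - k)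

/-- The operator `T_n = T_n(q,λ)`. -/
def TnOp (q : ℤ → ℂ) (lam : ℂ) (n : ℕ) (w : ℤ → ℂ) : ℤ → ℂ := fun m =>
  if |m| = (n : ℤ) then 0 else (lam - (m : ℂ) ^ 2)⁻¹ * fconv q w m

/-- Membership in `𝒬_n`. -/
def memQ (n : ℕ) (w : ℤ → ℂ) : Prop := w (n : ℤ) = 0 ∧ w (-(n : ℤ)) = 0

/-- The Neumann series `Σ_{k≥0} T_n^k w`. -/
def neumann (q : ℤ → ℂ) (lam : ℂ) (n : ℕ) (w : ℤ → ℂ) : ℤ → ℂ := fun m =>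
  ∑' k : ℕ, (TnOp q lam n)^[k] w m

/-- The Fourier coefficients of the exponential `e_p`. -/
def efun (p : ℤ) : ℤ → ℂ := fun k => if k = p then 1 else 0

/-- The function `g_p := e_p + (Id − T_n)^{-1} T_n e_p` (for `p = ±n`),
with the inverse realized by the Neumann series. -/
def gfun (q : ℤ → ℂ) (lam : ℂ) (n : ℕ) (p : ℤ) : ℤ → ℂ :=
  efun p + neumann q lam n (TnOp q lam n (efun p))

/-!
Expanding `(Id − T_n)⁻¹` in its Neumann series (the iterates decay like `2⁻ᵏ` in `H^s`) gives
`a_{±n} = ∑ₖ (q · T_nᵏ e_{±n})^(±n)`. For the bilinear pairing `⟨u, v⟩ = ∑ₘ u(m) v(−m)`,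
multiplication by `q` and the even Fourier multiplier `D = (λ − m²)⁻¹ 1_{|m| ≠ n}` are both
symmetric, hence so is the palindromic product `q T_nᵏ = q D q ⋯ D q` (as `T_n = D q`), and
`(q T_nᵏ e_n)^(n) = ⟨q T_nᵏ e_n, e_{−n}⟩ = ⟨e_n, q T_nᵏ e_{−n}⟩ = (q T_nᵏ e_{−n})^(−n)`.
-/

open Function Filter Topology
open scoped ENNReal

namespace ENNReal

lemma sq_add_le_two_mul (x y : ℝ≥0∞) : (x + y) ^ 2 ≤ 2 * (x ^ 2 + y ^ 2) := by
  have := ENNReal.rpow_add_le_mul_rpow_add_rpow x y (p := 2) one_le_two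
  norm_num [ENNReal.rpow_two] at this
  exact this

lemma sq_tsum_mul_le {ι : Type*} (w f : ι → ℝ≥0∞) :
    (∑' i, w i * f i) ^ 2 ≤ (∑' i, w i) * ∑' i, w i * f i ^ 2 := by
  have hlim : Tendsto (fun s : Finset ι => (∑ i ∈ s, w i * f i) ^ 2) atTop
      (𝓝 ((∑' i, w i * f i) ^ 2)) :=
    ((ENNReal.continuous_pow 2).tendsto _).comp ENNReal.summable.hasSum
  refine le_of_tendsto' hlim fun s => ?_
  calc (∑ i ∈ s, w i * f i) ^ 2
      ≤ ((∑ i ∈ s, w i) ^ (1 - (2 : ℝ)⁻¹) * (∑ i ∈ s, w i * f i ^ (2 : ℝ)) ^ (2 : ℝ)⁻¹) ^ 2 := by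
        gcongr
        exact ENNReal.inner_le_weight_mul_Lp_of_nonneg s one_le_two w f
    _ = (∑ i ∈ s, w i) * ∑ i ∈ s, w i * f i ^ 2 := by
        rw [mul_pow, ← ENNReal.rpow_natCast, ← ENNReal.rpow_natCast (_ ^ _), ← ENNReal.rpow_mul,
          ← ENNReal.rpow_mul]
        norm_num [ENNReal.rpow_two]
    _ ≤ (∑' i, w i) * ∑' i, w i * f i ^ 2 := by
        gcongr <;> exact ENNReal.sum_le_tsum s

lemma tsum_sq_conv_le {G : Type*} [AddCommGroup G] (f g : G → ℝ≥0∞) :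
    ∑' m, (∑' j, f j * g (m - j)) ^ 2 ≤ (∑' j, f j ^ 2) * (∑' j, g j) ^ 2 := by
  have hshift : ∀ m, ∑' j, g (m - j) = ∑' j, g j := fun m => (Equiv.subLeft m).tsum_eq g
  have hshift' : ∀ j, ∑' m, g (m - j) = ∑' m, g m := fun j => (Equiv.subRight j).tsum_eq g
  calc ∑' m, (∑' j, f j * g (m - j)) ^ 2
      ≤ ∑' m, (∑' j, g j) * ∑' j, g (m - j) * f j ^ 2 := by
        gcongr with m
        simpa only [mul_comm (f _), hshift] using sq_tsum_mul_le (fun j => g (m - j)) f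
    _ = (∑' j, g j) * ∑' j, f j ^ 2 * ∑' m, g (m - j) := by
        rw [ENNReal.tsum_mul_left, ENNReal.tsum_comm]
        simp_rw [mul_comm (g _), ENNReal.tsum_mul_left]
    _ = (∑' j, f j ^ 2) * (∑' j, g j) ^ 2 := by
        simp_rw [hshift', ENNReal.tsum_mul_right]
        ring

end ENNReal

lemma one_le_jap (m : ℤ) : 1 ≤ jap m := le_max_left _ _

lemma jap_pos (m : ℤ) : 0 < jap m := one_pos.trans_le (one_le_jap m)

lemma jap_add_le (a b : ℤ) : jap (a + b) ≤ jap a + jap b := by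
  unfold jap
  refine max_le (by linarith [le_max_left 1 |(a : ℝ)|, le_max_left 1 |(b : ℝ)|]) ?_
  push_cast
  exact (abs_add_le _ _).trans (add_le_add (le_max_right _ _) (le_max_right _ _))

lemma ofReal_jap_add_rpow_le {s : ℝ} (hs : 0 ≤ s) (a b : ℤ) :
    ENNReal.ofReal (jap (a + b)) ^ s ≤
      2 ^ s * (ENNReal.ofReal (jap a) ^ s + ENNReal.ofReal (jap b) ^ s) := by
  refine le_trans ?_ (ENNReal.add_rpow_le_two_rpow_mul_rpow_add_rpow _ _ hs)
  gcongr
  rw [← ENNReal.ofReal_add (jap_pos a).le (jap_pos b).le]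
  exact ENNReal.ofReal_le_ofReal (jap_add_le a b)

def weightedENorm (s : ℝ) (u : ℤ → ℂ) (m : ℤ) : ℝ≥0∞ := ENNReal.ofReal (jap m) ^ s * ‖u m‖ₑ

lemma memHs_iff_tsum_ne_top {s : ℝ} {u : ℤ → ℂ} :
    memHs s u ↔ ∑' m, weightedENorm s u m ^ 2 ≠ ∞ := by
  have hterm : ∀ m, weightedENorm s u m ^ 2 = ENNReal.ofReal (jap m ^ (2 * s) * ‖u m‖ ^ 2) := by
    intro m
    rw [weightedENorm, ENNReal.ofReal_rpow_of_pos (jap_pos m), ← ofReal_norm,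
      ← ENNReal.ofReal_mul (Real.rpow_nonneg (jap_pos m).le _), ← ENNReal.ofReal_pow
      (mul_nonneg (Real.rpow_nonneg (jap_pos m).le _) (norm_nonneg _)), mul_pow,
      ← Real.rpow_natCast, ← Real.rpow_mul (jap_pos m).le, mul_comm s]
    norm_num
  have hnonneg : ∀ m, 0 ≤ jap m ^ (2 * s) * ‖u m‖ ^ 2 :=
    fun m => mul_nonneg (Real.rpow_nonneg (jap_pos m).le _) (sq_nonneg _)
  unfold memHs
  simp_rw [hterm]
  refine ⟨Summable.tsum_ofReal_ne_top, fun h => ?_⟩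
  simpa only [ENNReal.toReal_ofReal (hnonneg _)] using ENNReal.summable_toReal h

lemma summable_norm_of_memHs {s : ℝ} (hs : 1 / 2 < s) {u : ℤ → ℂ} (hu : memHs s u) :
    Summable fun m => ‖u m‖ := by
  -- `2 ‖u m‖ ≤ ⟨m⟩^{-2s} + ⟨m⟩^{2s} ‖u m‖²` (AM-GM), and `⟨m⟩^{-2s}` is summable as `2s > 1`
  have hdecay : Summable fun m : ℤ => jap m ^ (-(2 * s)) := by
    refine Summable.of_norm_bounded_eventually
      (Real.summable_abs_int_rpow (b := 2 * s) (by linarith)) ?_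
    filter_upwards [(Set.finite_singleton (0 : ℤ)).compl_mem_cofinite] with m hm
    have hm1 : (1 : ℝ) ≤ |(m : ℝ)| := by exact_mod_cast Int.one_le_abs (by simpa using hm)
    rw [jap, max_eq_right hm1, Real.norm_of_nonneg (by positivity)]
  refine Summable.of_nonneg_of_le (fun m => norm_nonneg _) (fun m => ?_) (hdecay.add hu)
  have hprod : jap m ^ (-s) * (jap m ^ s * ‖u m‖) = ‖u m‖ := by
    rw [← mul_assoc, ← Real.rpow_add (jap_pos m), neg_add_cancel, Real.rpow_zero, one_mul]
  have hsq : ∀ t : ℝ, (jap m ^ t) ^ 2 = jap m ^ (2 * t) := fun t => by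
    rw [← Real.rpow_natCast, ← Real.rpow_mul (jap_pos m).le, mul_comm]; norm_num
  have := two_mul_le_add_sq (jap m ^ (-s)) (jap m ^ s * ‖u m‖)
  rw [mul_assoc, hprod, mul_pow, hsq, hsq, mul_neg] at this
  linarith [norm_nonneg (u m)]

lemma norm_le_sobNorm {s : ℝ} (hs : 0 ≤ s) {u : ℤ → ℂ} (hu : memHs s u) (m : ℤ) :
    ‖u m‖ ≤ sobNorm s u := by
  have hu0 : Summable fun m : ℤ => jap (m + 0) ^ (2 * s) * ‖u m‖ ^ 2 := by simpa [memHs] using hu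
  have hweight : 1 ≤ jap (m + 0) ^ (2 * s) := Real.one_le_rpow (one_le_jap _) (by positivity)
  refine Real.le_sqrt_of_sq_le ?_
  calc ‖u m‖ ^ 2 ≤ jap (m + 0) ^ (2 * s) * ‖u m‖ ^ 2 := le_mul_of_one_le_left (sq_nonneg _) hweight
    _ ≤ shiftNormSq s 0 u :=
      hu0.le_tsum m fun _ _ => mul_nonneg (Real.rpow_nonneg (jap_pos _).le _) (sq_nonneg _)

lemma weightedENorm_fconv_le {s : ℝ} (hs : 0 ≤ s) (q w : ℤ → ℂ) (m : ℤ) :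
    weightedENorm s (fconv q w) m ≤ 2 ^ s * (∑' j, weightedENorm s q j * ‖w (m - j)‖ₑ +
      ∑' j, weightedENorm s w j * ‖q (m - j)‖ₑ) := by
  set W : ℤ → ℝ≥0∞ := fun m => ENNReal.ofReal (jap m) ^ s
  have hsplit : ∀ j, W m * (‖q j‖ₑ * ‖w (m - j)‖ₑ) ≤ 2 ^ s *
      (weightedENorm s q j * ‖w (m - j)‖ₑ + weightedENorm s w (m - j) * ‖q j‖ₑ) := by
    intro j
    calc W m * (‖q j‖ₑ * ‖w (m - j)‖ₑ)
        ≤ 2 ^ s * (W j + W (m - j)) * (‖q j‖ₑ * ‖w (m - j)‖ₑ) := by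
          gcongr
          simpa using ofReal_jap_add_rpow_le hs j (m - j)
      _ = _ := by simp only [weightedENorm, W]; ring
  have hreindex : ∑' j, weightedENorm s w (m - j) * ‖q j‖ₑ =
      ∑' j, weightedENorm s w j * ‖q (m - j)‖ₑ := by
    simpa using ((Equiv.subLeft m).tsum_eq fun j => weightedENorm s w (m - j) * ‖q j‖ₑ).symm
  calc W m * ‖fconv q w m‖ₑ ≤ W m * ∑' j, ‖q j‖ₑ * ‖w (m - j)‖ₑ := by
        gcongr
        exact enorm_tsum_le_tsum_enorm.trans_eq (by simp only [enorm_mul])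
    _ ≤ _ := by
        rw [← ENNReal.tsum_mul_left, ← hreindex, ← ENNReal.tsum_add, ← ENNReal.tsum_mul_left]
        exact ENNReal.tsum_le_tsum hsplit

lemma memHs_fconv {s : ℝ} (hs : 0 ≤ s) {q w : ℤ → ℂ} (hq : memHs s q)
    (hq1 : Summable fun m => ‖q m‖) (hw : memHs s w) (hw1 : Summable fun m => ‖w m‖) :
    memHs s (fconv q w) := by
  rw [memHs_iff_tsum_ne_top] at hq hw ⊢
  rw [← tsum_enorm_ne_top_iff_summable_norm] at hq1 hw1
  set Q := weightedENorm s q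
  set V := weightedENorm s w
  refine ne_of_lt ?_
  calc ∑' m, weightedENorm s (fconv q w) m ^ 2
      ≤ ∑' m, (2 ^ s) ^ 2 * (2 * ((∑' j, Q j * ‖w (m - j)‖ₑ) ^ 2 +
          (∑' j, V j * ‖q (m - j)‖ₑ) ^ 2)) := by
        gcongr with m
        exact (pow_le_pow_left' (weightedENorm_fconv_le hs q w m) 2).trans
          (by rw [mul_pow]; gcongr; exact ENNReal.sq_add_le_two_mul _ _)
    _ = (2 ^ s) ^ 2 * (2 * (∑' m, (∑' j, Q j * ‖w (m - j)‖ₑ) ^ 2 +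
          ∑' m, (∑' j, V j * ‖q (m - j)‖ₑ) ^ 2)) := by
        rw [ENNReal.tsum_mul_left, ENNReal.tsum_mul_left, ENNReal.tsum_add]
    _ ≤ (2 ^ s) ^ 2 * (2 * ((∑' j, Q j ^ 2) * (∑' j, ‖w j‖ₑ) ^ 2 +
          (∑' j, V j ^ 2) * (∑' j, ‖q j‖ₑ) ^ 2)) := by
        gcongr <;> exact ENNReal.tsum_sq_conv_le _ _
    _ < ∞ := by
        have h2s : (2 : ℝ≥0∞) ^ s ≠ ∞ := ENNReal.rpow_ne_top_of_nonneg hs ENNReal.ofNat_ne_top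
        finiteness

section Operator

variable {s : ℝ} {q : ℤ → ℂ} {lam : ℂ} {n : ℕ}

lemma norm_inv_sub_sq_le_two (hn : 1 ≤ n) (hlam : ‖lam - (n : ℂ) ^ 2‖ ≤ (n : ℝ) / 2) {m : ℤ}
    (hm : |m| ≠ n) : ‖(lam - (m : ℂ) ^ 2)⁻¹‖ ≤ 2 := by
  have hn1 : (1 : ℝ) ≤ n := by exact_mod_cast hn
  -- `|m² − n²| = ||m| − n| (|m| + n) ≥ n`
  have hgap : (n : ℝ) ≤ |(m : ℝ) ^ 2 - (n : ℝ) ^ 2| := by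
    have hm2 : (m : ℝ) ^ 2 = (m.natAbs : ℝ) ^ 2 := by
      rw [Nat.cast_natAbs, Int.cast_abs, sq_abs]
    have hne : m.natAbs ≠ n := fun h => hm (by rw [Int.abs_eq_natAbs, h])
    rw [hm2]
    rcases Nat.lt_or_gt_of_ne hne with h | h
    · have h' : (m.natAbs : ℝ) + 1 ≤ n := by exact_mod_cast h
      rw [abs_of_nonpos (by nlinarith)]
      nlinarith
    · have h' : (n : ℝ) + 1 ≤ m.natAbs := by exact_mod_cast h
      rw [abs_of_nonneg (by nlinarith)]
      nlinarith
  have hgapC : ‖(m : ℂ) ^ 2 - (n : ℂ) ^ 2‖ = |(m : ℝ) ^ 2 - (n : ℝ) ^ 2| := by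
    rw [show (m : ℂ) ^ 2 - (n : ℂ) ^ 2 = (((m : ℝ) ^ 2 - (n : ℝ) ^ 2 : ℝ) : ℂ) by push_cast; rfl,
      Complex.norm_real, Real.norm_eq_abs]
  have htri : ‖(m : ℂ) ^ 2 - (n : ℂ) ^ 2‖ ≤ ‖lam - (n : ℂ) ^ 2‖ + ‖lam - (m : ℂ) ^ 2‖ := by
    rw [show (m : ℂ) ^ 2 - (n : ℂ) ^ 2 = (lam - (n : ℂ) ^ 2) - (lam - (m : ℂ) ^ 2) by ring]
    exact norm_sub_le _ _
  rw [norm_inv]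
  exact inv_le_of_inv_le₀ two_pos (by linarith)

lemma norm_TnOp_le (hn : 1 ≤ n) (hlam : ‖lam - (n : ℂ) ^ 2‖ ≤ (n : ℝ) / 2) (w : ℤ → ℂ) (m : ℤ) :
    ‖TnOp q lam n w m‖ ≤ 2 * ‖fconv q w m‖ := by
  unfold TnOp
  split_ifs with hm
  · simp
  · rw [norm_mul]
    gcongr
    exact norm_inv_sub_sq_le_two hn hlam hm

lemma memQ_TnOp (w : ℤ → ℂ) : memQ n (TnOp q lam n w) := by
  simp [memQ, TnOp]

lemma memHs_TnOp (hs : 1 / 2 < s) (hn : 1 ≤ n) (hlam : ‖lam - (n : ℂ) ^ 2‖ ≤ (n : ℝ) / 2)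
    (hq : memHs s q) {w : ℤ → ℂ} (hw : memHs s w) : memHs s (TnOp q lam n w) := by
  have hconv := memHs_fconv (by linarith) hq (summable_norm_of_memHs hs hq) hw
    (summable_norm_of_memHs hs hw)
  have hweight : ∀ m, 0 ≤ jap m ^ (2 * s) := fun m => Real.rpow_nonneg (jap_pos m).le _
  refine Summable.of_nonneg_of_le (fun m => mul_nonneg (hweight m) (sq_nonneg _)) (fun m => ?_)
    (hconv.mul_left 4)
  have hsq : ‖TnOp q lam n w m‖ ^ 2 ≤ 4 * ‖fconv q w m‖ ^ 2 := by
    nlinarith [norm_TnOp_le (q := q) hn hlam w m, norm_nonneg (TnOp q lam n w m)]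
  nlinarith [hweight m]

lemma memHs_iterate_TnOp (hs : 1 / 2 < s) (hn : 1 ≤ n)
    (hlam : ‖lam - (n : ℂ) ^ 2‖ ≤ (n : ℝ) / 2) (hq : memHs s q) {w : ℤ → ℂ} (hw : memHs s w)
    (k : ℕ) : memHs s ((TnOp q lam n)^[k] w) := by
  induction k with
  | zero => exact hw
  | succ k ih =>
    rw [iterate_succ_apply']
    exact memHs_TnOp hs hn hlam hq ih

lemma memHs_efun (s : ℝ) (p : ℤ) : memHs s (efun p) := by
  refine (hasSum_single p fun m hm => ?_).summable
  simp [efun, hm]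

end Operator

lemma fconv_tsum {ι : Type*} {q : ℤ → ℂ} (hq : Summable fun m => ‖q m‖) {w : ι → ℤ → ℂ}
    {b : ι → ℝ} (hb : Summable b) (hwb : ∀ k m, ‖w k m‖ ≤ b k) (p : ℤ) :
    fconv q (fun m => ∑' k, w k m) p = ∑' k, fconv q (w k) p := by
  have hprod : Summable (uncurry fun j k => q j * w k (p - j)) :=
    Summable.of_norm_bounded (hq.mul_of_nonneg hb (fun _ => norm_nonneg _)
      (fun k => (norm_nonneg _).trans (hwb k 0)))
      (fun x => by rw [uncurry_apply_pair, norm_mul]; gcongr; exact hwb _ _)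
  unfold fconv
  simp_rw [← tsum_mul_left]
  exact hprod.tsum_comm.symm

section Neumann

variable {s : ℝ} {q : ℤ → ℂ} {lam : ℂ} {n : ℕ}

lemma sobNorm_iterate_TnOp_le (hs : 1 / 2 < s) (hn : 1 ≤ n)
    (hlam : ‖lam - (n : ℂ) ^ 2‖ ≤ (n : ℝ) / 2) (hq : memHs s q)
    (hcontr : ∀ w, memQ n w → memHs s w → sobNorm s (TnOp q lam n w) ≤ 2⁻¹ * sobNorm s w)
    {w : ℤ → ℂ} (hw : memHs s w) (hwQ : memQ n w) (k : ℕ) :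
    sobNorm s ((TnOp q lam n)^[k] w) ≤ 2⁻¹ ^ k * sobNorm s w := by
  induction k with
  | zero => simp
  | succ k ih =>
    have hkQ : memQ n ((TnOp q lam n)^[k] w) := by
      cases k with
      | zero => exact hwQ
      | succ k => rw [iterate_succ_apply']; exact memQ_TnOp _
    rw [iterate_succ_apply', pow_succ', mul_assoc]
    exact (hcontr _ hkQ (memHs_iterate_TnOp hs hn hlam hq hw k)).trans (by gcongr)

lemma norm_iterate_TnOp_le (hs : 1 / 2 < s) (hn : 1 ≤ n)
    (hlam : ‖lam - (n : ℂ) ^ 2‖ ≤ (n : ℝ) / 2) (hq : memHs s q)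
    (hcontr : ∀ w, memQ n w → memHs s w → sobNorm s (TnOp q lam n w) ≤ 2⁻¹ * sobNorm s w)
    {w : ℤ → ℂ} (hw : memHs s w) (k : ℕ) (m : ℤ) :
    ‖(TnOp q lam n)^[k] w m‖ ≤ max (sobNorm s w) (2 * sobNorm s (TnOp q lam n w)) * 2⁻¹ ^ k := by
  have hs0 : 0 ≤ s := by linarith
  cases k with
  | zero => simpa using (norm_le_sobNorm hs0 hw m).trans (le_max_left _ _)
  | succ k =>
    have hTw := memHs_TnOp hs hn hlam hq hw
    rw [iterate_succ_apply]
    calc ‖(TnOp q lam n)^[k] (TnOp q lam n w) m‖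
        ≤ 2⁻¹ ^ k * sobNorm s (TnOp q lam n w) :=
          (norm_le_sobNorm hs0 (memHs_iterate_TnOp hs hn hlam hq hTw k) m).trans
            (sobNorm_iterate_TnOp_le hs hn hlam hq hcontr hTw (memQ_TnOp w) k)
      _ = 2 * sobNorm s (TnOp q lam n w) * 2⁻¹ ^ (k + 1) := by ring
      _ ≤ _ := by gcongr; exact le_max_right _ _

lemma gfun_apply_eq_tsum {p : ℤ} {m : ℤ} (hsum : Summable fun k => (TnOp q lam n)^[k] (efun p) m) :
    gfun q lam n p m = ∑' k, (TnOp q lam n)^[k] (efun p) m := by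
  rw [hsum.tsum_eq_zero_add]
  simp only [gfun, neumann, Pi.add_apply, iterate_zero, id_eq, iterate_succ_apply]

lemma fconv_gfun_eq_tsum (hs : 1 / 2 < s) (hn : 1 ≤ n)
    (hlam : ‖lam - (n : ℂ) ^ 2‖ ≤ (n : ℝ) / 2) (hq : memHs s q)
    (hcontr : ∀ w, memQ n w → memHs s w → sobNorm s (TnOp q lam n w) ≤ 2⁻¹ * sobNorm s w)
    (p : ℤ) :
    fconv q (gfun q lam n p) p = ∑' k, fconv q ((TnOp q lam n)^[k] (efun p)) p := by
  have hbound := norm_iterate_TnOp_le hs hn hlam hq hcontr (memHs_efun s p)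
  have hgeom : Summable fun k : ℕ =>
      max (sobNorm s (efun p)) (2 * sobNorm s (TnOp q lam n (efun p))) * 2⁻¹ ^ k :=
    (summable_geometric_of_lt_one (by norm_num) (by norm_num)).mul_left _
  have hg : gfun q lam n p = fun m => ∑' k, (TnOp q lam n)^[k] (efun p) m :=
    funext fun m => gfun_apply_eq_tsum (Summable.of_norm_bounded hgeom fun k => hbound k m)
  rw [hg]
  exact fconv_tsum (summable_norm_of_memHs hs hq) hgeom hbound p

end Neumann

/-- `(2π)⁻¹ ∫ u v` in terms of Fourier coefficients. Multiplication operators and even Fourier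
multipliers are symmetric for this pairing. -/
def reflPair (u v : ℤ → ℂ) : ℂ := ∑' m, u m * v (-m)

lemma reflPair_efun_left (p : ℤ) (u : ℤ → ℂ) : reflPair (efun p) u = u (-p) := by
  rw [reflPair, tsum_eq_single p fun m hm => by simp [efun, hm]]
  simp [efun]

lemma reflPair_efun_right (u : ℤ → ℂ) (p : ℤ) : reflPair u (efun p) = u (-p) := by
  rw [reflPair, tsum_eq_single (-p) fun m hm => by simp [efun, neg_eq_iff_eq_neg, hm]]
  simp [efun]

lemma reflPair_fconv {q u v : ℤ → ℂ} (hq : Summable fun m => ‖q m‖) {C : ℝ}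
    (hu : ∀ m, ‖u m‖ ≤ C) (hv : Summable fun m => ‖v m‖) :
    reflPair (fconv q u) v = reflPair u (fconv q v) := by
  set F : ℤ → ℤ → ℂ := fun j m => q j * u (m - j) * v (-m)
  have hF : Summable (uncurry F) := by
    have hv' : Summable fun m => ‖v (-m)‖ := (Equiv.neg ℤ).summable_iff.2 hv
    refine Summable.of_norm_bounded ((hq.mul_right C).mul_of_nonneg hv'
      (fun j => mul_nonneg (norm_nonneg _) ((norm_nonneg _).trans (hu 0))) fun _ => norm_nonneg _)
      fun x => ?_
    simp only [uncurry, F, norm_mul]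
    gcongr
    exact hu _
  let shear : ℤ × ℤ ≃ ℤ × ℤ := (Equiv.refl ℤ).prodShear fun j => Equiv.addRight j
  have hshear : uncurry F ∘ shear = uncurry fun j m => q j * u m * v (-m - j) := by
    ext ⟨j, m⟩
    show F j (m + j) = _
    simp only [F, uncurry_apply_pair, add_sub_cancel_right, neg_add']
  have hG := (shear.summable_iff.2 hF)
  rw [hshear] at hG
  calc reflPair (fconv q u) v = ∑' m, ∑' j, F j m := by
        simp only [reflPair, fconv, F, tsum_mul_right]
    _ = ∑' x, uncurry F x := by rw [hF.tsum_comm, hF.tsum_prod]; rfl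
    _ = ∑' x, (uncurry F ∘ shear) x := (shear.tsum_eq _).symm
    _ = ∑' m, ∑' j, q j * u m * v (-m - j) := by rw [hshear, hG.tsum_comm, hG.tsum_prod]; rfl
    _ = reflPair u (fconv q v) := by
        simp only [reflPair, fconv, ← tsum_mul_left]
        exact tsum_congr fun m => tsum_congr fun j => by ring

section Symmetry

variable {s : ℝ} {q : ℤ → ℂ} {lam : ℂ} {n : ℕ}

lemma reflPair_TnOp_fconv (u v : ℤ → ℂ) :
    reflPair (TnOp q lam n u) (fconv q v) = reflPair (fconv q u) (TnOp q lam n v) := by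
  refine tsum_congr fun m => ?_
  simp only [TnOp, abs_neg, Int.cast_neg, neg_sq]
  split_ifs <;> ring

lemma reflPair_fconv_iterate_TnOp (hs : 1 / 2 < s) (hn : 1 ≤ n)
    (hlam : ‖lam - (n : ℂ) ^ 2‖ ≤ (n : ℝ) / 2) (hq : memHs s q) (k : ℕ) :
    ∀ u v, memHs s u → memHs s v →
      reflPair (fconv q ((TnOp q lam n)^[k] u)) v =
        reflPair u (fconv q ((TnOp q lam n)^[k] v)) := by
  have hs0 : 0 ≤ s := by linarith
  have hq1 := summable_norm_of_memHs hs hq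
  induction k with
  | zero => exact fun u v hu hv =>
      reflPair_fconv hq1 (norm_le_sobNorm hs0 hu) (summable_norm_of_memHs hs hv)
  | succ k ih =>
    intro u v hu hv
    have hTkv := memHs_TnOp hs hn hlam hq (memHs_iterate_TnOp hs hn hlam hq hv k)
    calc reflPair (fconv q ((TnOp q lam n)^[k + 1] u)) v
        = reflPair (TnOp q lam n u) (fconv q ((TnOp q lam n)^[k] v)) := by
          rw [iterate_succ_apply, ih _ _ (memHs_TnOp hs hn hlam hq hu) hv]
      _ = reflPair (fconv q u) (TnOp q lam n ((TnOp q lam n)^[k] v)) := reflPair_TnOp_fconv _ _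
      _ = reflPair u (fconv q ((TnOp q lam n)^[k + 1] v)) := by
          rw [reflPair_fconv hq1 (norm_le_sobNorm hs0 hu) (summable_norm_of_memHs hs hTkv),
            iterate_succ_apply']

lemma fconv_iterate_TnOp_efun_neg (hs : 1 / 2 < s) (hn : 1 ≤ n)
    (hlam : ‖lam - (n : ℂ) ^ 2‖ ≤ (n : ℝ) / 2) (hq : memHs s q) (p : ℤ) (k : ℕ) :
    fconv q ((TnOp q lam n)^[k] (efun p)) p = fconv q ((TnOp q lam n)^[k] (efun (-p))) (-p) := by
  have h := reflPair_fconv_iterate_TnOp hs hn hlam hq k (efun p) (efun (-p))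
    (memHs_efun s p) (memHs_efun s (-p))
  rwa [reflPair_efun_right, reflPair_efun_left, neg_neg] at h

end Symmetry

theorem fconv_gfun_neg_eq {s : ℝ} {q : ℤ → ℂ} {lam : ℂ} {n : ℕ} (hs : 1 / 2 < s) (hn : 1 ≤ n)
    (hlam : ‖lam - (n : ℂ) ^ 2‖ ≤ (n : ℝ) / 2) (hq : memHs s q)
    (hcontr : ∀ w, memQ n w → memHs s w → sobNorm s (TnOp q lam n w) ≤ 2⁻¹ * sobNorm s w)
    (p : ℤ) : fconv q (gfun q lam n p) p = fconv q (gfun q lam n (-p)) (-p) := by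
  rw [fconv_gfun_eq_tsum hs hn hlam hq hcontr, fconv_gfun_eq_tsum hs hn hlam hq hcontr]
  exact tsum_congr (fconv_iterate_TnOp_efun_neg hs hn hlam hq p)

/-- **Lemma 3.4 (i).** `a_n = a_{−n}`, where `a_{±n} := (q·g_{±n}, e_{±n})_{L²}`. -/
theorem lemma_3_4_i (s : ℝ) (hs : 1 / 2 < s) (Cs : ℝ) (hCs : 0 < Cs)
    (hbound : ∀ (q : ℤ → ℂ) (n : ℕ) (lam : ℂ) (j : ℤ) (w : ℤ → ℂ),
      1 ≤ n → memHs s q →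
      ‖lam - (n : ℂ) ^ 2‖ ≤ (n : ℝ) / 2 →
      memQ n w → memHs s w →
      shiftNorm s j (TnOp q lam n w) ≤ Cs * (n : ℝ)⁻¹ * sobNorm s q * shiftNorm s j w)
    (q : ℤ → ℂ) (n : ℕ) (hn : 1 ≤ n) (hq : memHs s q)
    (hqsmall : sobNorm s q ≤ (n : ℝ) / (2 * Cs))
    (lam : ℝ) (hlam : |lam - (n : ℝ) ^ 2| ≤ (n : ℝ) / 2) :
    fconv q (gfun q (lam : ℂ) n (n : ℤ)) (n : ℤ) =
      fconv q (gfun q (lam : ℂ) n (-(n : ℤ))) (-(n : ℤ)) := by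
  have hlamC : ‖(lam : ℂ) - (n : ℂ) ^ 2‖ ≤ (n : ℝ) / 2 := by
    rwa [show (lam : ℂ) - (n : ℂ) ^ 2 = ((lam - (n : ℝ) ^ 2 : ℝ) : ℂ) by push_cast; rfl,
      Complex.norm_real, Real.norm_eq_abs]
  have hsmall : Cs * (n : ℝ)⁻¹ * sobNorm s q ≤ 2⁻¹ := by
    have hn0 : (0 : ℝ) < n := by exact_mod_cast hn
    calc Cs * (n : ℝ)⁻¹ * sobNorm s q ≤ Cs * (n : ℝ)⁻¹ * ((n : ℝ) / (2 * Cs)) := by gcongr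
      _ = 2⁻¹ := by field_simp
  refine fconv_gfun_neg_eq hs hn hlamC hq (fun w hwQ hw => ?_) n
  exact (hbound q n lam 0 w hn hq hlamC hwQ hw).trans
    (mul_le_mul_of_nonneg_right hsmall (Real.sqrt_nonneg _))
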